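/- arXiv:1802.01092 — 4 statements merged into one kernel-verified Lean document; each statement's English description precedes it below -/
import Mathlib

section
/- Let G be a Lie group with Lie algebra 𝔤 and ψ(s) = exp(sU) a one-parameter subgroup whose closure K in G is not ψ(ℝ). Then K is not isomorphic (as a topological group) to ℝ × K₁ for any connected abelian Lie group K₁ with the projection to ℝ restricting to an isomorphism on ψ(ℝ); equivalently, the closure of a non-closed one-parameter subgroup of a Lie group is compact. -/
/-!
A non-closed range means `ψ` is not proper, so `ψ` has a cluster point along `cocompact ℝ`;
differences of such times show that `ψ` returns to every neighbourhood of `1` at arbitrarily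
large times, hence every point of the closure of the range is a cluster point of `ψ` at `+∞`.
Fix a compact neighbourhood `C` of `1`. If the return times to `C` had arbitrarily long gaps
`(s, s + n]` with `ψ s ∈ C`, a cluster point `p` of these `ψ s` would satisfy
`p ψ(u) ∉ interior C` for all `u > 0`, which is absurd because `p⁻¹` lies in the closure of
the range. So the return times have bounded gaps, of length `L` say, and the closure lies in
the compact set `C · ψ([0, L])`.
-/

open Filter Topology Set
open scoped Pointwise

def IsSyndetic (S : Set ℝ) : Prop :=
  ∃ L : ℝ, ∀ t : ℝ, (S ∩ Ioc t (t + L)).Nonempty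

theorem IsClosed.exists_disjoint_Ioc_of_not_isSyndetic {S : Set ℝ} (hS : IsClosed S)
    (hbot : ∃ᶠ t in atBot, t ∈ S) (hsyn : ¬ IsSyndetic S) (L : ℝ) :
    ∃ s ∈ S, Disjoint S (Ioc s (s + L)) := by
  obtain ⟨t, ht⟩ : ∃ t, S ∩ Ioc t (t + L) = ∅ := by
    simp only [IsSyndetic, not_exists, not_forall, not_nonempty_iff_eq_empty] at hsyn
    exact hsyn L
  obtain ⟨b, hbt, hbS⟩ := frequently_atBot.mp hbot t
  have hne : (S ∩ Iic t).Nonempty := ⟨b, hbS, hbt⟩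
  have hbdd : BddAbove (S ∩ Iic t) := ⟨t, fun _ hx => hx.2⟩
  obtain ⟨hsS, hst⟩ := (hS.inter isClosed_Iic).csSup_mem hne hbdd
  refine ⟨_, hsS, Set.disjoint_left.mpr fun x hxS hx => ?_⟩
  rcases le_or_gt x t with hxt | hxt
  · exact (le_csSup hbdd ⟨hxS, hxt⟩).not_gt hx.1
  · exact ht.subset ⟨hxS, hxt, by linarith [hx.2, mem_Iic.mp hst]⟩

theorem tendsto_cocompact_of_forall_not_mapClusterPt {X Y : Type*} [TopologicalSpace Y]
    {f : X → Y} {l : Filter X} (h : ∀ y, ¬ MapClusterPt y l f) :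
    Tendsto f l (cocompact Y) := by
  refine hasBasis_cocompact.tendsto_right_iff.mpr fun K hK => ?_
  by_contra hfreq
  obtain ⟨y, -, hy⟩ := hK.exists_clusterPt_of_frequently (l := map f l) (by
    simpa [Filter.not_eventually] using hfreq)
  exact h y hy

namespace AddChar

variable {G : Type*} [TopologicalSpace G] [Group G] [IsTopologicalGroup G] {ψ : AddChar ℝ G}

theorem mapClusterPt_one_atTop {q : G} (hq : MapClusterPt q (cocompact ℝ) ψ) :
    MapClusterPt 1 atTop ψ := by
  refine mapClusterPt_iff_frequently.mpr fun W hW => frequently_atTop.mpr fun T => ?_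
  obtain ⟨W₀, hW₀, hW₀W⟩ := exists_nhds_split_inv hW
  have hN : ∃ᶠ t in cocompact ℝ, ψ t * q⁻¹ ∈ W₀ :=
    hq.frequently ((continuous_mul_const q⁻¹).continuousAt.preimage_mem_nhds (by simpa))
  obtain ⟨a, ha⟩ := hN.exists
  obtain ⟨b, hb, hbT⟩ := (hN.and_eventually
    (isCompact_Icc (a := a - T) (b := a + T)).compl_mem_cocompact).exists
  have hdiff : ∀ x y, ψ (x - y) = (ψ x * q⁻¹) / (ψ y * q⁻¹) := fun x y => by
    rw [sub_eq_add_neg, map_add_eq_mul, map_neg_eq_inv, div_eq_mul_inv, mul_inv_rev, inv_inv,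
      mul_assoc, inv_mul_cancel_left]
  rcases not_and_or.mp hbT with hlt | hgt
  · exact ⟨a - b, by linarith [not_le.mp hlt], hdiff a b ▸ hW₀W _ ha _ hb⟩
  · exact ⟨b - a, by linarith [not_le.mp hgt], hdiff b a ▸ hW₀W _ hb _ ha⟩

theorem mapClusterPt_one_atBot (h : MapClusterPt 1 atTop ψ) : MapClusterPt 1 atBot ψ := by
  have hinv := h.continuousAt_comp continuous_inv.continuousAt
  rw [inv_one, show (·⁻¹) ∘ ψ = ψ ∘ Neg.neg from
    funext fun t => (map_neg_eq_inv ψ t).symm] at hinv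
  exact hinv.of_comp tendsto_neg_atTop_atBot

theorem closure_range_subset_mapClusterPt (h : MapClusterPt 1 atTop ψ) :
    closure (range ψ) ⊆ {x | MapClusterPt x atTop ψ} := by
  refine closure_minimal ?_ isClosed_setOfPred_clusterPt
  rintro _ ⟨t, rfl⟩
  have ht := h.continuousAt_comp (continuous_const_mul (ψ t)).continuousAt
  rw [mul_one, show (ψ t * ·) ∘ ψ = ψ ∘ (t + ·) from
    funext fun s => (map_add_eq_mul ψ t s).symm] at ht
  exact ht.of_comp (tendsto_atTop_add_const_left atTop t tendsto_id)

theorem not_forall_exists_disjoint_preimage_Ioc (h : MapClusterPt 1 atTop ψ) {C V : Set G}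
    (hC : IsCompact C) (hV : IsOpen V) (hV1 : (1 : G) ∈ V) :
    ¬ ∀ n : ℕ, ∃ s, ψ s ∈ C ∧ Disjoint (ψ ⁻¹' V) (Ioc s (s + n)) := by
  intro hgaps
  choose s hsC hgap using hgaps
  obtain ⟨p, -, hp⟩ := hC.exists_mapClusterPt (f := atTop) (u := ψ ∘ s)
    (tendsto_principal.mpr (Eventually.of_forall hsC))
  have hp_inv : p⁻¹ ∈ closure (range ψ) := by
    exact isClosed_closure.mem_of_mapClusterPt (hp.continuousAt_comp continuous_inv.continuousAt)
      (Eventually.of_forall fun n => subset_closure ⟨-s n, map_neg_eq_inv ψ (s n)⟩)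
  obtain ⟨u, hu, hu0⟩ := ((closure_range_subset_mapClusterPt h hp_inv).frequently
    ((continuous_const_mul p).continuousAt.preimage_mem_nhds (hV.mem_nhds (by simpa)))
    |>.and_eventually (eventually_gt_atTop 0)).exists
  obtain ⟨n, hn, hun⟩ := (hp.frequently
    ((continuous_mul_const (ψ u)).continuousAt.preimage_mem_nhds (hV.mem_nhds hu))
    |>.and_eventually (eventually_ge_atTop ⌈u⌉₊)).exists
  have hmem : s n + u ∈ ψ ⁻¹' V := by simpa [map_add_eq_mul] using hn
  exact Set.disjoint_left.mp (hgap n) hmem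
    ⟨by linarith, by linarith [Nat.le_ceil u, (Nat.cast_le (α := ℝ)).mpr hun]⟩

theorem isSyndetic_preimage (h : MapClusterPt 1 atTop ψ) (hψ : Continuous ψ) {C : Set G}
    (hC : IsCompact C) (hCc : IsClosed C) (hC1 : C ∈ 𝓝 1) : IsSyndetic (ψ ⁻¹' C) := by
  by_contra hsyn
  refine not_forall_exists_disjoint_preimage_Ioc h hC isOpen_interior
    (mem_interior_iff_mem_nhds.mpr hC1) fun n => ?_
  obtain ⟨s, hs, hgap⟩ := (hCc.preimage hψ).exists_disjoint_Ioc_of_not_isSyndetic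
    ((mapClusterPt_one_atBot h).frequently hC1) hsyn n
  exact ⟨s, hs, hgap.mono_left (preimage_mono interior_subset)⟩

theorem isCompact_closure_range_of_isSyndetic (hψ : Continuous ψ) {C : Set G}
    (hC : IsCompact C) (hsyn : IsSyndetic (ψ ⁻¹' C)) : IsCompact (closure (range ψ)) := by
  obtain ⟨L, hL⟩ := hsyn
  refine (hC.mul ((isCompact_Icc (a := 0) (b := L)).image hψ)).closure_of_subset ?_
  rintro _ ⟨t, rfl⟩
  obtain ⟨s, hsC, hs⟩ := hL (t - L)
  rw [show t = s + (t - s) by ring, map_add_eq_mul]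
  exact mul_mem_mul hsC (mem_image_of_mem _ ⟨by linarith [hs.2], by linarith [hs.1]⟩)

end AddChar

/-- The closure of a non-closed one-parameter subgroup `ψ(s) = exp(sU)` of a Lie group
is compact (equivalently, it cannot be of the form `ℝ × K₁`). -/
theorem stmt_1 {E : Type*} [NormedAddCommGroup E] [NormedSpace ℝ E] [FiniteDimensional ℝ E]
    {H : Type*} [TopologicalSpace H] {I : ModelWithCorners ℝ E H}
    {G : Type*} [TopologicalSpace G] [ChartedSpace H G] [Group G] [LieGroup I (⊤ : ℕ∞) G] [T2Space G]
    (ψ : ℝ → G) (hψhom : ∀ s t : ℝ, ψ (s + t) = ψ s * ψ t) (hψcont : Continuous ψ)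
    (hnotclosed : ¬ IsClosed (Set.range ψ)) :
    IsCompact (closure (Set.range ψ)) := by
  have : IsTopologicalGroup G := topologicalGroup_of_lieGroup I (⊤ : ℕ∞)
  have : LocallyCompactSpace G := Manifold.locallyCompact_of_finiteDimensional I
  let χ : AddChar ℝ G :=
    { toFun := ψ
      map_zero_eq_one' := by simpa using hψhom 0 0
      map_add_eq_mul' := hψhom }
  obtain ⟨q, hq⟩ : ∃ q, MapClusterPt q (cocompact ℝ) χ := by
    by_contra! h
    exact hnotclosed (isProperMap_iff_tendsto_cocompact.mpr
      ⟨hψcont, tendsto_cocompact_of_forall_not_mapClusterPt h⟩).isClosed_range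
  obtain ⟨C, hC, hC1⟩ := exists_compact_mem_nhds (1 : G)
  exact AddChar.isCompact_closure_range_of_isSyndetic hψcont hC
    (AddChar.isSyndetic_preimage (AddChar.mapClusterPt_one_atTop hq) hψcont hC hC.isClosed hC1)
end

section
/- In the Lie algebra with basis E₁,E₂,E₃ satisfying [E₁,E₂]=E₃, [E₂,E₃]=E₁, [E₁,E₃]=-E₂, equipped with the inner product making aE₁, bE₂, cE₃ orthonormal where a, b, c are pairwise distinct positive reals, every geodesic vector (i.e. vector X with ([X,Y],X)=0 for all Y) is a scalar multiple of one of E₁, E₂, E₃. -/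
/-- In the Lie algebra with basis `E₁,E₂,E₃`, `[E₁,E₂]=E₃`, `[E₂,E₃]=E₁`, `[E₁,E₃]=-E₂`,
with the inner product `B` making `aE₁, bE₂, cE₃` orthonormal where `a,b,c` are pairwise
distinct positive reals, every geodesic vector is a scalar multiple of some `Eᵢ`. -/
theorem stmt_13 {V : Type*} [AddCommGroup V] [Module ℝ V]
    (bracket : V →ₗ[ℝ] V →ₗ[ℝ] V)
    (halt : ∀ X, bracket X X = 0)
    (E : Module.Basis (Fin 3) ℝ V)
    (h12 : bracket (E 0) (E 1) = E 2)
    (h23 : bracket (E 1) (E 2) = E 0)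
    (h13 : bracket (E 0) (E 2) = -E 1)
    (a b c : ℝ) (ha : 0 < a) (hb : 0 < b) (hc : 0 < c)
    (hab : a ≠ b) (hbc : b ≠ c) (hac : a ≠ c)
    (B : V →ₗ[ℝ] V →ₗ[ℝ] ℝ)
    (hBsymm : ∀ X Y, B X Y = B Y X) (hBpos : ∀ X, X ≠ 0 → 0 < B X X)
    (hBon : ∀ i j : Fin 3, B (![a, b, c] i • E i) (![a, b, c] j • E j)
      = if i = j then 1 else 0)
    (X : V) (hgeo : ∀ Y, B (bracket X Y) X = 0) :
    ∃ (i : Fin 3) (t : ℝ), X = t • E i := by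
  have hanti : ∀ U W : V, bracket U W = - bracket W U := by
    intro U W
    have h := halt (U + W)
    simp only [map_add, LinearMap.add_apply, halt, zero_add, add_zero] at h
    exact eq_neg_of_add_eq_zero_right h
  have h21 : bracket (E 1) (E 0) = -E 2 := by rw [hanti, h12]
  have h20 : bracket (E 2) (E 0) = E 1 := by rw [hanti, h13]; simp
  have h32 : bracket (E 2) (E 1) = -E 0 := by rw [hanti, h23]
  have hBmul : ∀ i j : Fin 3, (![a,b,c] i) * ((![a,b,c] j) * B (E i) (E j))
      = if i = j then 1 else 0 := by
    intro i j
    have h := hBon i j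
    simpa [map_smul, LinearMap.smul_apply, smul_eq_mul, mul_comm, mul_left_comm] using h
  have offdiag : ∀ i j : Fin 3, i ≠ j → B (E i) (E j) = 0 := by
    intro i j hij
    have h := hBmul i j
    rw [if_neg hij] at h
    rcases mul_eq_zero.mp h with h' | h'
    · exfalso; fin_cases i <;> simp at h' <;> [exact ha.ne' h'; exact hb.ne' h'; exact hc.ne' h']
    · rcases mul_eq_zero.mp h' with h'' | h''
      · exfalso; fin_cases j <;> simp at h'' <;> [exact ha.ne' h''; exact hb.ne' h''; exact hc.ne' h'']
      · exact h''
  have hB01 : B (E 0) (E 1) = 0 := offdiag 0 1 (by decide)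
  have hB02 : B (E 0) (E 2) = 0 := offdiag 0 2 (by decide)
  have hB12 : B (E 1) (E 2) = 0 := offdiag 1 2 (by decide)
  have hB10 : B (E 1) (E 0) = 0 := by rw [hBsymm]; exact hB01
  have hB20 : B (E 2) (E 0) = 0 := by rw [hBsymm]; exact hB02
  have hB21 : B (E 2) (E 1) = 0 := by rw [hBsymm]; exact hB12
  have hB00 : a * (a * B (E 0) (E 0)) = 1 := by have := hBmul 0 0; simpa using this
  have hB11 : b * (b * B (E 1) (E 1)) = 1 := by have := hBmul 1 1; simpa using this
  have hB22 : c * (c * B (E 2) (E 2)) = 1 := by have := hBmul 2 2; simpa using this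
  set x0 := E.repr X 0 with hx0
  set x1 := E.repr X 1 with hx1
  set x2 := E.repr X 2 with hx2
  have hX : X = x0 • E 0 + x1 • E 1 + x2 • E 2 := by
    have := E.sum_repr X
    rw [Fin.sum_univ_three] at this
    exact this.symm
  have e0 := hgeo (E 0)
  have e1 := hgeo (E 1)
  have e2 := hgeo (E 2)
  rw [hX] at e0 e1 e2
  simp only [map_add, map_smul, LinearMap.add_apply, LinearMap.smul_apply, halt,
    h12, h21, h20, h32, h13, h23, map_neg, LinearMap.neg_apply, smul_eq_mul,
    hB01, hB02, hB12, hB10, hB20, hB21, smul_zero, mul_zero, zero_add, add_zero,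
    neg_zero, mul_neg, neg_add, neg_neg] at e0 e1 e2
  have hne : ∀ u v : ℝ, 0 < u → 0 < v → u ≠ v → u*u - v*v ≠ 0 := by
    intro u v hu hv huv h
    have h' : u * u = v * v := by linarith
    rcases mul_self_eq_mul_self_iff.mp h' with h'' | h''
    · exact huv h''
    · nlinarith
  have p12 : x1 * x2 = 0 := by
    have hkey : x1 * x2 * (b*b - c*c) = 0 := by
      linear_combination (-(b*b*c*c))*e0 + x1*x2*c*c*hB11 - x1*x2*b*b*hB22
    exact (mul_eq_zero.mp hkey).resolve_right (hne b c hb hc hbc)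
  have p02 : x0 * x2 = 0 := by
    have hkey : x0 * x2 * (a*a - c*c) = 0 := by
      linear_combination (a*a*c*c)*e1 + x0*x2*c*c*hB00 - x0*x2*a*a*hB22
    exact (mul_eq_zero.mp hkey).resolve_right (hne a c ha hc hac)
  have p01 : x0 * x1 = 0 := by
    have hkey : x0 * x1 * (a*a - b*b) = 0 := by
      linear_combination (-(a*a*b*b))*e2 + x0*x1*b*b*hB00 - x0*x1*a*a*hB11
    exact (mul_eq_zero.mp hkey).resolve_right (hne a b ha hb hab)
  by_cases h0 : x0 = 0
  · by_cases h1 : x1 = 0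
    · exact ⟨2, x2, by rw [hX, h0, h1]; simp⟩
    · have h2 : x2 = 0 := (mul_eq_zero.mp p12).resolve_left h1
      exact ⟨1, x1, by rw [hX, h0, h2]; simp⟩
  · have h1 : x1 = 0 := (mul_eq_zero.mp p01).resolve_left h0
    have h2 : x2 = 0 := (mul_eq_zero.mp p02).resolve_left h0
    exact ⟨0, x0, by rw [hX, h1, h2]; simp⟩
end

section
/- In the Lie algebra with basis E₁,E₂,E₃ satisfying [E₁,E₂]=E₃, [E₂,E₃]=E₁, [E₁,E₃]=-E₂, equipped with the inner product making aE₁, aE₂, cE₃ orthonormal with a ≠ c positive, a vector X = x₁E₁ + x₂E₂ + x₃E₃ is a geodesic vector if and only if x₃ = 0 or x₁ = x₂ = 0. -/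
/-!
Write `X = x₁E₁ + x₂E₂ + x₃E₃` and `gᵢ = B(Eᵢ, Eᵢ)`. Since `E` is orthogonal for `B` and the bracket
is that of `so(3)`, the linear functional `Y ↦ B([X,Y], X)` takes the values
`(g₂ - g₃) x₂x₃`, `(g₃ - g₁) x₁x₃`, `(g₁ - g₂) x₁x₂` on `E₁, E₂, E₃` (Euler's equations of a rigid
body with moments of inertia `gᵢ`). Here `g₁ = g₂ = a⁻² ≠ c⁻² = g₃`, so the functional vanishes
iff `x₂x₃ = x₁x₃ = 0`.
-/

section ScaledOrthonormal

variable {K M ι : Type*} [Field K] [AddCommGroup M] [Module K M] [DecidableEq ι]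

theorem LinearMap.apply_eq_ite_of_smul_orthonormal (B : M →ₗ[K] M →ₗ[K] K) (v : ι → M)
    (w : ι → K) (h : ∀ i j, B (w i • v i) (w j • v j) = if i = j then 1 else 0) (i j : ι) :
    B (v i) (v j) = if i = j then (w i ^ 2)⁻¹ else 0 := by
  have hdiag (k : ι) : w k ^ 2 * B (v k) (v k) = 1 := by
    simpa [pow_two, mul_assoc] using h k k
  have hw (k : ι) : w k ≠ 0 := by
    rintro hk
    simpa [hk] using hdiag k
  split_ifs with hij
  · subst hij
    exact eq_inv_of_mul_eq_one_right (hdiag i)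
  · simpa [hij, hw i, hw j] using h i j

end ScaledOrthonormal

section EulerEquations

variable {K V : Type*} [Field K] [AddCommGroup V] [Module K V]
  {bracket : V →ₗ[K] V →ₗ[K] V} (halt : bracket.IsAlt) {E : Fin 3 → V}
  {B : V →ₗ[K] V →ₗ[K] K} {g : Fin 3 → K} (hB : ∀ i j, B (E i) (E j) = if i = j then g i else 0)
  (x₁ x₂ x₃ : K)
include halt hB

theorem apply_bracket_basis_zero (h12 : bracket (E 0) (E 1) = E 2)
    (h13 : bracket (E 0) (E 2) = -E 1) :
    B (bracket (x₁ • E 0 + x₂ • E 1 + x₃ • E 2) (E 0)) (x₁ • E 0 + x₂ • E 1 + x₃ • E 2)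
      = (g 1 - g 2) * x₂ * x₃ := by
  have h21 : bracket (E 1) (E 0) = -E 2 := by rw [← halt.neg, h12]
  have h31 : bracket (E 2) (E 0) = E 1 := by rw [← halt.neg, h13, neg_neg]
  simp only [map_add, map_smul, LinearMap.add_apply, LinearMap.smul_apply, halt.self_eq_zero,
    smul_zero, h21, smul_neg, zero_add, h31, map_neg, LinearMap.neg_apply, hB, Fin.reduceEq,
    ↓reduceIte, smul_eq_mul, mul_zero, add_zero, one_ne_zero]
  ring

theorem apply_bracket_basis_one (h12 : bracket (E 0) (E 1) = E 2)
    (h23 : bracket (E 1) (E 2) = E 0) :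
    B (bracket (x₁ • E 0 + x₂ • E 1 + x₃ • E 2) (E 1)) (x₁ • E 0 + x₂ • E 1 + x₃ • E 2)
      = (g 2 - g 0) * x₁ * x₃ := by
  have h32 : bracket (E 2) (E 1) = -E 0 := by rw [← halt.neg, h23]
  simp only [map_add, map_smul, LinearMap.add_apply, LinearMap.smul_apply, h12, halt.self_eq_zero,
    smul_zero, add_zero, h32, smul_neg, map_neg, hB, Fin.reduceEq, ↓reduceIte, smul_eq_mul,
    mul_zero, zero_add, LinearMap.neg_apply, zero_ne_one]
  ring

theorem apply_bracket_basis_two (h23 : bracket (E 1) (E 2) = E 0)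
    (h13 : bracket (E 0) (E 2) = -E 1) :
    B (bracket (x₁ • E 0 + x₂ • E 1 + x₃ • E 2) (E 2)) (x₁ • E 0 + x₂ • E 1 + x₃ • E 2)
      = (g 0 - g 1) * x₁ * x₂ := by
  simp only [map_add, map_smul, LinearMap.add_apply, LinearMap.smul_apply, h13, smul_neg, h23,
    halt.self_eq_zero, smul_zero, add_zero, map_neg, LinearMap.neg_apply, hB, one_ne_zero,
    ↓reduceIte, smul_eq_mul, mul_zero, Fin.reduceEq, zero_ne_one]
  ring

end EulerEquations

theorem stmt_14_general {V : Type*} [AddCommGroup V] [Module ℝ V]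
    (bracket : V →ₗ[ℝ] V →ₗ[ℝ] V)
    (halt : ∀ X, bracket X X = 0)
    (E : Module.Basis (Fin 3) ℝ V)
    (h12 : bracket (E 0) (E 1) = E 2)
    (h23 : bracket (E 1) (E 2) = E 0)
    (h13 : bracket (E 0) (E 2) = -E 1)
    (a c : ℝ) (ha : 0 < a) (hc : 0 < c) (hac : a ≠ c)
    (B : V →ₗ[ℝ] V →ₗ[ℝ] ℝ)
    (hBon : ∀ i j : Fin 3, B (![a, a, c] i • E i) (![a, a, c] j • E j)
      = if i = j then 1 else 0)
    (x₁ x₂ x₃ : ℝ) :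
    (∀ Y, B (bracket (x₁ • E 0 + x₂ • E 1 + x₃ • E 2) Y)
        (x₁ • E 0 + x₂ • E 1 + x₃ • E 2) = 0)
      ↔ (x₃ = 0 ∨ (x₁ = 0 ∧ x₂ = 0)) := by
  have hB := B.apply_eq_ite_of_smul_orthonormal E _ hBon
  have hgap : (a ^ 2)⁻¹ ≠ (c ^ 2)⁻¹ := by
    rwa [Ne, inv_inj, sq_eq_sq₀ ha.le hc.le]
  have hbasis (X : V) : (∀ Y, B (bracket X Y) X = 0) ↔ ∀ i, B (bracket X (E i)) X = 0 := by
    refine ⟨fun h i => h (E i), fun h Y => ?_⟩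
    have hzero : B.flip X ∘ₗ bracket X = 0 := E.ext fun i => h i
    exact LinearMap.congr_fun hzero Y
  rw [hbasis, Fin.forall_fin_succ, Fin.forall_fin_succ, Fin.forall_fin_one]
  simp only [Fin.succ_zero_eq_one, Fin.succ_one_eq_two,
    apply_bracket_basis_zero halt hB _ _ _ h12 h13, apply_bracket_basis_one halt hB _ _ _ h12 h23,
    apply_bracket_basis_two halt hB _ _ _ h23 h13]
  simp only [Matrix.cons_val_one, Matrix.cons_val_zero, Matrix.cons_val, mul_eq_zero, sub_eq_zero,
    hgap, hgap.symm, false_or, sub_self, zero_mul, and_true]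
  tauto

/-- In the Lie algebra with basis `E₁,E₂,E₃`, `[E₁,E₂]=E₃`, `[E₂,E₃]=E₁`, `[E₁,E₃]=-E₂`,
with the inner product `B` making `aE₁, aE₂, cE₃` orthonormal (`a ≠ c` positive), a vector
`X = x₁E₁ + x₂E₂ + x₃E₃` is geodesic iff `x₃ = 0` or `x₁ = x₂ = 0`. -/
theorem stmt_14 {V : Type*} [AddCommGroup V] [Module ℝ V]
    (bracket : V →ₗ[ℝ] V →ₗ[ℝ] V)
    (halt : ∀ X, bracket X X = 0)
    (E : Module.Basis (Fin 3) ℝ V)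
    (h12 : bracket (E 0) (E 1) = E 2)
    (h23 : bracket (E 1) (E 2) = E 0)
    (h13 : bracket (E 0) (E 2) = -E 1)
    (a c : ℝ) (ha : 0 < a) (hc : 0 < c) (hac : a ≠ c)
    (B : V →ₗ[ℝ] V →ₗ[ℝ] ℝ)
    (hBsymm : ∀ X Y, B X Y = B Y X) (hBpos : ∀ X, X ≠ 0 → 0 < B X X)
    (hBon : ∀ i j : Fin 3, B (![a, a, c] i • E i) (![a, a, c] j • E j)
      = if i = j then 1 else 0)
    (x₁ x₂ x₃ : ℝ) :
    (∀ Y, B (bracket (x₁ • E 0 + x₂ • E 1 + x₃ • E 2) Y)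
        (x₁ • E 0 + x₂ • E 1 + x₃ • E 2) = 0)
      ↔ (x₃ = 0 ∨ (x₁ = 0 ∧ x₂ = 0)) :=
  stmt_14_general bracket halt E h12 h23 h13 a c ha hc hac B hBon x₁ x₂ x₃
end

section
/- Let γ be a homogeneous geodesic in a complete Riemannian manifold (M,g), i.e. γ(t) = exp(tU)(x) for some one-parameter isometry group. If the image γ(ℝ) is unbounded in M, then γ(ℝ) is a closed subset of M. -/
/-!
Put `f t = d(γ t, γ 0)`; since the flow acts by isometries, `d(γ s, γ t) = f (s - t)`, so `f` is
even and subadditive, and it is unbounded. Subadditivity forces `{f ≤ 1}` to have gaps of every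
length `n` (otherwise `f` would be bounded); let `a n` be the left end of such a gap. The points
`γ (a n)` lie in the compact ball of radius `1`, so two of them, `γ A` and `γ (a m)` with `m` as
large as we like, are `1/2`-close. Shifting by `a m - A` moves any `t > A` into the gap after
`a m`, whence `f t > 1/2` for all `t > A`: the orbit never returns near its starting point.
Hence a point of `closure γ(ℝ)` can only be approached by `γ` on a bounded time interval, whose
image is compact, so it lies on `γ(ℝ)`.
-/

open Filter Metric Set

section Subadditive

variable {f : ℝ → ℝ}

theorem exists_forall_Icc_lt_of_not_bddAbove (hf : Continuous f) (heven : ∀ t, f (-t) = f t)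
    (hsub : ∀ a b, f (a + b) ≤ f a + f b) (hunb : ¬ BddAbove (range f)) (c G : ℝ) :
    ∃ t₀, 0 ≤ t₀ ∧ ∀ u ∈ Icc t₀ (t₀ + G), c < f u := by
  by_contra! h
  obtain ⟨S, hS⟩ := (isCompact_Icc (a := 0) (b := G)).bddAbove_image hf.continuousOn
  have hbound : ∀ t, 0 ≤ t → f t ≤ c + S := by
    intro t ht
    obtain ⟨u, ⟨htu, huG⟩, hfu⟩ := h t ht
    have hS' : f (u - t) ≤ S := hS (mem_image_of_mem f ⟨by linarith, by linarith⟩)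
    calc f t = f (u + -(u - t)) := by ring_nf
      _ ≤ f u + f (u - t) := heven (u - t) ▸ hsub _ _
      _ ≤ c + S := add_le_add hfu hS'
  refine hunb ⟨c + S, ?_⟩
  rintro _ ⟨t, rfl⟩
  rcases le_total 0 t with ht | ht
  · exact hbound t ht
  · exact heven t ▸ hbound (-t) (neg_nonneg.2 ht)

theorem exists_le_forall_Ioc_lt_of_not_bddAbove (hf : Continuous f)
    (heven : ∀ t, f (-t) = f t) (hsub : ∀ a b, f (a + b) ≤ f a + f b)
    (hunb : ¬ BddAbove (range f)) {c : ℝ} (h0 : f 0 ≤ c) (G : ℝ) :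
    ∃ a, f a ≤ c ∧ ∀ u ∈ Ioc a (a + G), c < f u := by
  obtain ⟨t₀, ht₀, hgap⟩ := exists_forall_Icc_lt_of_not_bddAbove hf heven hsub hunb c G
  set s := Iic t₀ ∩ f ⁻¹' Iic c
  have h0s : (0 : ℝ) ∈ s := ⟨ht₀, h0⟩
  have hbdd : BddAbove s := ⟨t₀, fun _ hu => hu.1⟩
  have hmem : sSup s ∈ s :=
    (isClosed_Iic.inter (isClosed_Iic.preimage hf)).csSup_mem ⟨0, h0s⟩ hbdd
  refine ⟨sSup s, hmem.2, fun u ⟨hau, hua⟩ => ?_⟩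
  by_cases hut : u ≤ t₀
  · by_contra! hle
    exact (le_csSup hbdd ⟨hut, hle⟩).not_gt hau
  · have hst₀ : sSup s ≤ t₀ := hmem.1
    exact hgap u ⟨(not_le.1 hut).le, by linarith⟩

end Subadditive

theorem dist_flow_apply_eq {X : Type*} [PseudoMetricSpace X] (φ : ℝ → X ≃ᵢ X)
    (hflow : ∀ s t : ℝ, φ (s + t) = (φ t).trans (φ s)) (x : X) (a b : ℝ) :
    dist (φ a x) (φ b x) = dist (φ (a - b) x) (φ 0 x) := by
  have h : ∀ s, φ (b + s) x = φ b (φ s x) := fun s => by rw [hflow]; rfl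
  rw [← (φ b).dist_eq (φ (a - b) x), ← h, ← h, add_zero, add_sub_cancel]

section HomogeneousCurve

variable {X : Type*} {γ : ℝ → X}

theorem dist_neg_zero_eq [PseudoMetricSpace X]
    (hγ : ∀ a b, dist (γ a) (γ b) = dist (γ (a - b)) (γ 0)) (t : ℝ) :
    dist (γ (-t)) (γ 0) = dist (γ t) (γ 0) := by
  rw [← zero_sub, ← hγ, dist_comm]

theorem dist_add_zero_le [PseudoMetricSpace X]
    (hγ : ∀ a b, dist (γ a) (γ b) = dist (γ (a - b)) (γ 0)) (a b : ℝ) :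
    dist (γ (a + b)) (γ 0) ≤ dist (γ a) (γ 0) + dist (γ b) (γ 0) := by
  simpa [hγ (a + b) b] using dist_triangle (γ (a + b)) (γ b) (γ 0)

theorem exists_eventually_le_dist_of_not_isBounded [PseudoMetricSpace X] [ProperSpace X]
    (hγ : ∀ a b, dist (γ a) (γ b) = dist (γ (a - b)) (γ 0)) (hc : Continuous γ)
    (hunb : ¬ Bornology.IsBounded (range γ)) :
    ∃ ε > 0, ∀ᶠ t in atTop, ε ≤ dist (γ t) (γ 0) := by
  have hunb' : ¬ BddAbove (range fun t => dist (γ t) (γ 0)) := by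
    rintro ⟨C, hC⟩
    exact hunb <| (isBounded_closedBall (x := γ 0) (r := C)).subset <|
      range_subset_iff.2 fun t => mem_closedBall.2 (hC ⟨t, rfl⟩)
  choose a ha hgap using fun n : ℕ =>
    exists_le_forall_Ioc_lt_of_not_bddAbove (hc.dist continuous_const) (dist_neg_zero_eq hγ)
      (dist_add_zero_le hγ) hunb' (c := 1) (by simp) n
  obtain ⟨p, -, ψ, hψ, hlim⟩ := (isCompact_closedBall (γ 0) 1).tendsto_subseq
    (x := fun n => γ (a n)) fun n => mem_closedBall.2 (ha n)
  obtain ⟨J, hJ⟩ := Metric.cauchySeq_iff'.1 hlim.cauchySeq (1 / 2) (by norm_num)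
  refine ⟨1 / 2, by norm_num, (eventually_gt_atTop (a (ψ J))).mono fun t ht => ?_⟩
  obtain ⟨j, hjJ, hjt⟩ := ((eventually_ge_atTop J).and
    ((tendsto_natCast_atTop_atTop.comp hψ.tendsto_atTop).eventually_ge_atTop
      (t - a (ψ J)))).exists
  have hclose : dist (γ (a (ψ j) - a (ψ J))) (γ 0) < 1 / 2 := by
    rw [← hγ]
    exact hJ j hjJ
  have hfar : 1 < dist (γ (t + (a (ψ j) - a (ψ J)))) (γ 0) :=
    hgap (ψ j) _ ⟨by linarith, by simp only [Function.comp_apply] at hjt; linarith⟩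
  linarith [dist_add_zero_le hγ t (a (ψ j) - a (ψ J))]

theorem isClosed_range_of_eventually_le_dist [MetricSpace X]
    (hγ : ∀ a b, dist (γ a) (γ b) = dist (γ (a - b)) (γ 0)) (hc : Continuous γ) {ε : ℝ}
    (hε : 0 < ε) (hfar : ∀ᶠ t in atTop, ε ≤ dist (γ t) (γ 0)) :
    IsClosed (range γ) := by
  obtain ⟨T, hT⟩ := eventually_atTop.1 hfar
  have hnear : ∀ s t, dist (γ s) (γ t) < ε → |s - t| < T := by
    intro s t hst
    by_contra! h
    rcases le_abs.1 h with h | h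
    · exact (hT _ h).not_gt (hγ s t ▸ hst)
    · exact (hT _ h).not_gt (by rwa [dist_neg_zero_eq hγ, ← hγ])
  refine isClosed_of_closure_subset fun y hy => ?_
  obtain ⟨_, ⟨t₀, rfl⟩, hy₀⟩ := Metric.mem_closure_iff.1 hy (ε / 2) (half_pos hε)
  have hK : y ∈ closure (γ '' Icc (t₀ - T) (t₀ + T)) := by
    refine Metric.mem_closure_iff.2 fun δ hδ => ?_
    obtain ⟨_, ⟨s, rfl⟩, hys⟩ :=
      Metric.mem_closure_iff.1 hy (min δ (ε / 2)) (lt_min hδ (half_pos hε))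
    have hst : |s - t₀| < T := hnear s t₀ <| by
      linarith [dist_triangle (γ s) y (γ t₀), dist_comm y (γ s), min_le_right δ (ε / 2)]
    exact ⟨γ s, mem_image_of_mem γ ⟨by linarith [abs_lt.1 hst], by linarith [abs_lt.1 hst]⟩,
      hys.trans_le (min_le_left _ _)⟩
  exact image_subset_range _ _ ((isCompact_Icc.image hc).isClosed.closure_subset hK)

end HomogeneousCurve

/-- A homogeneous geodesic `γ(t) = exp(tU)·x` (an orbit of a one-parameter isometry group)
in a complete Riemannian manifold — modeled as a proper metric space `M` — is a closed
subset of `M` if its image is unbounded. -/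
theorem stmt_16 {M : Type*} [MetricSpace M] [ProperSpace M]
    (φ : ℝ → M ≃ᵢ M) (hflow : ∀ s t : ℝ, φ (s + t) = (φ t).trans (φ s))
    (hcont : Continuous fun p : ℝ × M => φ p.1 p.2)
    (x : M) (γ : ℝ → M) (hγ : ∀ t, γ t = φ t x)
    (hunbounded : ¬ Bornology.IsBounded (Set.range γ)) :
    IsClosed (Set.range γ) := by
  obtain rfl : γ = fun t => φ t x := funext hγ
  have hhom := dist_flow_apply_eq φ hflow x
  have hc : Continuous fun t => φ t x := hcont.comp (continuous_id.prodMk continuous_const)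
  obtain ⟨ε, hε, hfar⟩ := exists_eventually_le_dist_of_not_isBounded hhom hc hunbounded
  exact isClosed_range_of_eventually_le_dist hhom hc hε hfar
end
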